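/- arXiv:1801.00518 — 2 statements merged into one kernel-verified Lean document; each statement's English description precedes it below -/
import Mathlib

section
/- Let M be a p×p k-sparse real matrix, let Z be any p×p real matrix with max_{i,j}|Z_{ij}| < τ for some τ > 0, and let X = M + Z. Define the thresholded matrix M̂ with entries M̂_{ij} = X_{ij}·1{|X_{ij}| ≥ τ}. Then M̂ is k-sparse (M̂_{ij} = 0 whenever M_{ij} = 0), every row and column of M̂ − M has ℓ₁-norm at most 2kτ, and consequently ‖M̂ − M‖₂ ≤ 2kτ. -/
noncomputable section

/-- Spectral norm (largest singular value) of a real matrix. -/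
def specNorm {m n : Type*} [Fintype m] [Fintype n] [DecidableEq n]
    (A : Matrix m n ℝ) : ℝ :=
  ‖LinearMap.toContinuousLinearMap (Matrix.toEuclideanLin A)‖

/-- A matrix is `k`-sparse if every row and column has at most `k` nonzero entries. -/
def IsKSparse {p : ℕ} (k : ℕ) (M : Matrix (Fin p) (Fin p) ℝ) : Prop :=
  (∀ i, (Finset.univ.filter fun j => M i j ≠ 0).card ≤ k) ∧
  (∀ j, (Finset.univ.filter fun i => M i j ≠ 0).card ≤ k)

end

/-! Outside the support of `M` the noise stays below the threshold, so the estimate vanishes there;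
on the support each entry errs by less than `2τ`. Hence every row and column of `M̂ - M` has at
most `k` nonzero entries, each of size below `2τ`, and the Schur test `‖A‖₂² ≤ ‖A‖₁ ‖A‖_∞`
turns these ℓ¹ bounds into the spectral bound. -/

open Finset Matrix

section SchurTest

variable {m n : Type*} [Fintype n]

theorem Matrix.sq_mulVec_apply_le (A : Matrix m n ℝ) (x : n → ℝ) (i : m) :
    (A *ᵥ x) i ^ 2 ≤ (∑ j, |A i j|) * ∑ j, |A i j| * x j ^ 2 :=
  sum_sq_le_sum_mul_sum_of_sq_le_mul _ (fun _ _ => abs_nonneg _) (fun _ _ => by positivity)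
    fun j _ => by rw [mul_pow, ← sq_abs (A i j), sq, mul_assoc]

variable [Fintype m] [DecidableEq n]

theorem Matrix.norm_toEuclideanLin_sq_le {a b : ℝ} (ha : 0 ≤ a) (A : Matrix m n ℝ)
    (hrow : ∀ i, ∑ j, |A i j| ≤ a) (hcol : ∀ j, ∑ i, |A i j| ≤ b) (x : EuclideanSpace ℝ n) :
    ‖Matrix.toEuclideanLin A x‖ ^ 2 ≤ a * b * ‖x‖ ^ 2 := by
  rw [EuclideanSpace.real_norm_sq_eq, EuclideanSpace.real_norm_sq_eq]
  calc ∑ i, (A *ᵥ x.ofLp) i ^ 2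
      ≤ ∑ i, a * ∑ j, |A i j| * x j ^ 2 := sum_le_sum fun i _ =>
        (A.sq_mulVec_apply_le x.ofLp i).trans
          (mul_le_mul_of_nonneg_right (hrow i) (by positivity))
    _ = a * ∑ j, (∑ i, |A i j|) * x j ^ 2 := by
        rw [← mul_sum, sum_comm]
        simp_rw [sum_mul]
    _ ≤ a * ∑ j, b * x j ^ 2 := by gcongr with j; exact hcol j
    _ = a * b * ∑ j, x j ^ 2 := by rw [← mul_sum, mul_assoc]

theorem specNorm_le_sqrt_mul {a b : ℝ} (ha : 0 ≤ a) (A : Matrix m n ℝ)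
    (hrow : ∀ i, ∑ j, |A i j| ≤ a) (hcol : ∀ j, ∑ i, |A i j| ≤ b) :
    specNorm A ≤ √(a * b) :=
  ContinuousLinearMap.opNorm_le_bound _ (Real.sqrt_nonneg _) fun x => by
    rw [← Real.sqrt_sq (norm_nonneg x), ← Real.sqrt_mul' _ (sq_nonneg _)]
    exact (le_abs_self _).trans
      (Real.abs_le_sqrt (A.norm_toEuclideanLin_sq_le ha hrow hcol x))

end SchurTest

section Support

variable {ι : Type*} [Fintype ι]

theorem card_filter_ne_zero_le_of_zero_imp {f g : ι → ℝ} (hfg : ∀ j, g j = 0 → f j = 0) :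
    #{j | f j ≠ 0} ≤ #{j | g j ≠ 0} :=
  card_le_card <| monotone_filter_right _ fun j _ hf hg => hf (hfg j hg)

theorem sum_abs_sub_le_of_zero_imp {f g : ι → ℝ} {c : ℝ} {k : ℕ} (hc : 0 ≤ c)
    (hfg : ∀ j, g j = 0 → f j = 0) (hdiff : ∀ j, |f j - g j| ≤ c) (hg : #{j | g j ≠ 0} ≤ k) :
    ∑ j, |f j - g j| ≤ k * c :=
  calc ∑ j, |f j - g j|
      = ∑ j ∈ {j | g j ≠ 0}, |f j - g j| := by
        refine (sum_subset (subset_univ _) fun j _ hj => ?_).symm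
        simp only [mem_filter, mem_univ, true_and, not_not] at hj
        simp [hj, hfg j hj]
    _ ≤ #{j | g j ≠ 0} • c := sum_le_card_nsmul _ _ _ fun j _ => hdiff j
    _ ≤ k * c := by rw [nsmul_eq_mul]; gcongr

end Support

theorem IsKSparse.of_zero_imp {p k : ℕ} {M N : Matrix (Fin p) (Fin p) ℝ} (hM : IsKSparse k M)
    (hMN : ∀ i j, M i j = 0 → N i j = 0) : IsKSparse k N :=
  ⟨fun i => (card_filter_ne_zero_le_of_zero_imp (hMN i)).trans (hM.1 i),
    fun j => (card_filter_ne_zero_le_of_zero_imp (hMN · j)).trans (hM.2 j)⟩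

noncomputable def hardThreshold (τ x : ℝ) : ℝ := if τ ≤ |x| then x else 0

theorem hardThreshold_of_abs_lt {τ x : ℝ} (h : |x| < τ) : hardThreshold τ x = 0 :=
  if_neg h.not_ge

theorem abs_hardThreshold_add_sub_lt {τ m z : ℝ} (hz : |z| < τ) :
    |hardThreshold τ (m + z) - m| < 2 * τ := by
  unfold hardThreshold
  split_ifs with h
  · rw [add_sub_cancel_left]; linarith [abs_nonneg z]
  · rw [zero_sub, abs_neg]
    calc |m| = |(m + z) - z| := by rw [add_sub_cancel_right]
      _ ≤ |m + z| + |z| := abs_sub _ _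
      _ < 2 * τ := by linarith

/-- entrywise thresholding of a sparse matrix observed with small perturbation. -/
theorem threshold_estimate_of_sparse (p k : ℕ) (τ : ℝ) (hτ : 0 < τ)
    (M Z X Mhat : Matrix (Fin p) (Fin p) ℝ)
    (hM : IsKSparse k M)
    (hZ : ∀ i j, |Z i j| < τ)
    (hX : X = M + Z)
    (hMhat : ∀ i j, Mhat i j = if τ ≤ |X i j| then X i j else 0) :
    (∀ i j, M i j = 0 → Mhat i j = 0) ∧
    IsKSparse k Mhat ∧
    (∀ i, ∑ j, |Mhat i j - M i j| ≤ 2 * k * τ) ∧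
    (∀ j, ∑ i, |Mhat i j - M i j| ≤ 2 * k * τ) ∧
    specNorm (Mhat - M) ≤ 2 * k * τ := by
  subst hX
  have hsupp : ∀ i j, M i j = 0 → Mhat i j = 0 := fun i j h =>
    (hMhat i j).trans (hardThreshold_of_abs_lt (by simpa [h] using hZ i j))
  have hdiff : ∀ i j, |Mhat i j - M i j| ≤ 2 * τ := fun i j => by
    rw [hMhat]; exact (abs_hardThreshold_add_sub_lt (hZ i j)).le
  have hrow : ∀ i, ∑ j, |Mhat i j - M i j| ≤ 2 * k * τ := fun i => by
    linarith [sum_abs_sub_le_of_zero_imp (by positivity) (hsupp i) (hdiff i) (hM.1 i)]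
  have hcol : ∀ j, ∑ i, |Mhat i j - M i j| ≤ 2 * k * τ := fun j => by
    linarith [sum_abs_sub_le_of_zero_imp (by positivity) (hsupp · j) (hdiff · j) (hM.2 j)]
  refine ⟨hsupp, hM.of_zero_imp hsupp, hrow, hcol, ?_⟩
  calc specNorm (Mhat - M) ≤ √(2 * k * τ * (2 * k * τ)) :=
        specNorm_le_sqrt_mul (by positivity) _ hrow hcol
    _ = 2 * k * τ := Real.sqrt_mul_self (by positivity)
end

section
/- There exist an absolute constant b₀ > 0 and a function B : (0, b₀) → (0, ∞) such that the following holds for all integers p ≥ 1 and 1 ≤ m ≤ p and all b ∈ (0, b₀): with λ = b·min{(1/m)·log(ep/m), p²/m⁴}, one has E[exp(λ·H²)] ≤ B(b). In particular the expectation is bounded by a finite constant depending only on b and not on p or m. -/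
open Real Finset

noncomputable section

/-- The probability `P(H = i)` for `H ~ Hypergeometric(p, m, m)`. -/
def hyperPMF (p m i : ℕ) : ℝ :=
  ((m.choose i : ℝ) * ((p - m).choose (m - i) : ℝ)) / (p.choose m : ℝ)

/-- `E[exp (t · G_i²)]` where `G_i` is the position of a symmetric (Rademacher)
random walk after `i` steps. -/
def walkSqMGF (t : ℝ) (i : ℕ) : ℝ :=
  (1 / 2 ^ i) * ∑ s : Fin i → Bool, Real.exp (t * (∑ j, (if s j then (1 : ℝ) else -1)) ^ 2)

/-- `E[exp (t · G_H²)]` where `H ~ Hypergeometric(p, m, m)` and `G` is an independent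
symmetric random walk. -/
def hyperWalkMGF (p m : ℕ) (t : ℝ) : ℝ :=
  ∑ i ∈ Finset.range (m + 1), hyperPMF p m i * walkSqMGF t i

/-- `E[exp (λ · H²)]` where `H ~ Hypergeometric(p, m, m)`. -/
def hyperSqMGF (p m : ℕ) (lam : ℝ) : ℝ :=
  ∑ i ∈ Finset.range (m + 1), hyperPMF p m i * Real.exp (lam * (i : ℝ) ^ 2)

end

/-!
Split the sum at `i * p = e³ m²`. Below the threshold the cap `λ ≤ b p² / m⁴` gives
`λ i² ≤ b e⁶`, so those terms contribute at most `exp (b e⁶)`. Above it, the pointwise bound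
`P(H = i) ≤ (e m² / (i p))ⁱ` beats `exp (λ i²)` as soon as `λ ≤ log (e p / m) / (4 m)`:
the terms are at most `2⁻ⁱ`, and sum to at most `2`.
-/

theorem Nat.descFactorial_mul_pow_le {m p : ℕ} (hmp : m ≤ p) (i : ℕ) :
    m.descFactorial i * p ^ i ≤ p.descFactorial i * m ^ i := by
  rw [Nat.descFactorial_eq_prod_range, Nat.descFactorial_eq_prod_range,
    ← Finset.card_range i, ← Finset.prod_const, ← Finset.prod_const, Finset.card_range,
    ← Finset.prod_mul_distrib, ← Finset.prod_mul_distrib]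
  refine Finset.prod_le_prod' fun j _ => ?_
  rw [Nat.sub_mul, Nat.sub_mul, Nat.mul_comm p m]
  exact Nat.sub_le_sub_left (Nat.mul_le_mul_left j hmp) _

theorem Nat.choose_mul_pow_le {m p : ℕ} (hmp : m ≤ p) (i : ℕ) :
    m.choose i * p ^ i ≤ p.choose i * m ^ i := by
  have h := Nat.descFactorial_mul_pow_le hmp i
  rw [Nat.descFactorial_eq_factorial_mul_choose, Nat.descFactorial_eq_factorial_mul_choose,
    Nat.mul_assoc, Nat.mul_assoc] at h
  exact Nat.le_of_mul_le_mul_left h i.factorial_pos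

theorem Nat.choose_sub_mul_pow_le {m p i : ℕ} (him : i ≤ m) (hmp : m ≤ p) :
    (p - i).choose (m - i) * p ^ i ≤ p.choose m * m ^ i := by
  refine Nat.le_of_mul_le_mul_left ?_ (Nat.choose_pos (him.trans hmp))
  calc p.choose i * ((p - i).choose (m - i) * p ^ i)
      = p.choose m * m.choose i * p ^ i := by rw [Nat.choose_mul him]; ring
    _ ≤ p.choose m * (p.choose i * m ^ i) := by
      rw [Nat.mul_assoc]; exact Nat.mul_le_mul_left _ (Nat.choose_mul_pow_le hmp i)
    _ = p.choose i * (p.choose m * m ^ i) := by ring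

open Nat in
theorem Nat.choose_le_exp_mul_div_pow (n k : ℕ) :
    (n.choose k : ℝ) ≤ (exp 1 * n / k) ^ k := by
  rcases k.eq_zero_or_pos with rfl | hk
  · simp
  have hk' : (0 : ℝ) < k := by exact_mod_cast hk
  have hfac : (k : ℝ) ^ k / exp 1 ^ k ≤ k ! := by
    rw [div_le_iff₀ (by positivity), ← exp_nat_mul, mul_one, mul_comm, ← div_le_iff₀ (by positivity)]
    exact pow_div_factorial_le_exp _ hk'.le k
  calc (n.choose k : ℝ) ≤ n ^ k / k ! := Nat.choose_le_pow_div k n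
    _ ≤ n ^ k / (k ^ k / exp 1 ^ k) := by gcongr
    _ = (exp 1 * n / k) ^ k := by rw [div_div_eq_mul_div, div_pow, mul_pow, mul_comm]

theorem hyperPMF_nonneg (p m i : ℕ) : 0 ≤ hyperPMF p m i := by
  unfold hyperPMF; positivity

theorem sum_hyperPMF {p m : ℕ} (hmp : m ≤ p) :
    ∑ i ∈ range (m + 1), hyperPMF p m i = 1 := by
  have vandermonde : ∑ i ∈ range (m + 1), m.choose i * (p - m).choose (m - i) = p.choose m := by
    rw [← Nat.sum_antidiagonal_eq_sum_range_succ (fun a b => m.choose a * (p - m).choose b),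
      ← Nat.add_choose_eq, Nat.add_sub_cancel' hmp]
  simp only [hyperPMF]
  rw [← sum_div, div_eq_one_iff_eq (by exact_mod_cast (Nat.choose_pos hmp).ne')]
  exact_mod_cast vandermonde

theorem hyperPMF_le_pow {p m i : ℕ} (him : i ≤ m) (hmp : m ≤ p) :
    hyperPMF p m i ≤ (exp 1 * m ^ 2 / (i * p)) ^ i := by
  have hpi : (0 : ℝ) < p ^ i := by
    rcases i.eq_zero_or_pos with rfl | hi
    · simp
    · exact pow_pos (by exact_mod_cast hi.trans_le (him.trans hmp)) i
  have tail : ((p - m).choose (m - i) : ℝ) ≤ p.choose m * m ^ i / p ^ i := by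
    rw [le_div_iff₀ hpi]
    exact_mod_cast (Nat.mul_le_mul_right _ (Nat.choose_le_choose _ (by omega))).trans
      (Nat.choose_sub_mul_pow_le him hmp)
  rw [hyperPMF, div_le_iff₀ (by exact_mod_cast Nat.choose_pos hmp)]
  calc (m.choose i : ℝ) * (p - m).choose (m - i)
      ≤ (exp 1 * m / i) ^ i * (p.choose m * m ^ i / p ^ i) := by
        gcongr
        exact Nat.choose_le_exp_mul_div_pow m i
    _ = (exp 1 * m ^ 2 / (i * p)) ^ i * p.choose m := by
        rw [div_pow, div_pow, mul_pow, mul_pow, mul_pow, ← pow_mul]; ring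

theorem exp_one_div_mul_exp_log_le_half {r x : ℝ} (hx₀ : 0 < x) (hx₁ : x ≤ 1)
    (hrx : exp 3 ≤ r * x) : exp 1 / (r * x) * exp (x * log (exp 1 * r) / 4) ≤ 1 / 2 := by
  have hrx₀ : 0 < r * x := (exp_pos 3).trans_le hrx
  have hr : 0 < r := pos_of_mul_pos_left hrx₀ hx₀.le
  have hy : 3 ≤ log (r * x) := (le_log_iff_exp_le hrx₀).2 hrx
  -- `log (e r) = 1 + log (r x) + log x⁻¹`, and the factor `x` keeps `x log x⁻¹ ≤ 1 - x` bounded.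
  have hxlog : x * -log x ≤ 1 - x := by
    have := log_le_sub_one_of_pos (inv_pos.2 hx₀)
    rw [log_inv] at this
    calc x * -log x ≤ x * (x⁻¹ - 1) := by gcongr
      _ = 1 - x := by field_simp
  rw [log_mul (exp_pos 1).ne' hr.ne', log_exp]
  rw [log_mul hr.ne' hx₀.ne'] at hy
  calc exp 1 / (r * x) * exp (x * (1 + log r) / 4)
      = exp (1 - (log r + log x) + x * (1 + log r) / 4) := by
        rw [exp_add, exp_sub, ← log_mul hr.ne' hx₀.ne', exp_log hrx₀]
    _ ≤ exp (-1) := by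
        gcongr
        nlinarith [mul_le_mul_of_nonneg_right hx₁ (by linarith : 0 ≤ log r + log x)]
    _ ≤ 1 / 2 := exp_neg_one_lt_half.le

theorem hyperPMF_mul_exp_sq_le_half_pow {p m i : ℕ} {b lam : ℝ} (him : i ≤ m) (hmp : m ≤ p)
    (hb : b ≤ 1 / 4) (hlam : lam ≤ b * (1 / m * log (exp 1 * p / m)))
    (hlarge : exp 3 * m ^ 2 < i * p) :
    hyperPMF p m i * exp (lam * i ^ 2) ≤ (1 / 2) ^ i := by
  have hi : (0 : ℝ) < i := by
    by_contra! h
    nlinarith [exp_pos 3, sq_nonneg (m : ℝ), (Nat.cast_nonneg p : (0 : ℝ) ≤ p)]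
  have hm : (0 : ℝ) < m := hi.trans_le (by exact_mod_cast him)
  set x : ℝ := i / m
  set r : ℝ := p / m
  have hx₁ : x ≤ 1 := div_le_one_of_le₀ (by exact_mod_cast him) hm.le
  have hrx : exp 3 ≤ r * x := by
    rw [div_mul_div_comm, le_div_iff₀ (by positivity)]; nlinarith
  have hlog : 0 ≤ x * log (exp 1 * r) := by
    refine mul_nonneg (by positivity) (log_nonneg (one_le_mul_of_one_le_of_one_le ?_ ?_))
    · exact one_le_exp zero_le_one
    · exact (one_le_div hm).2 (by exact_mod_cast hmp)
  have hpmf : hyperPMF p m i ≤ (exp 1 / (r * x)) ^ i := by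
    have hp : (0 : ℝ) < p := hm.trans_le (by exact_mod_cast hmp)
    convert hyperPMF_le_pow him hmp using 2
    simp only [x, r]
    field_simp
  have hexp : exp (lam * i ^ 2) ≤ exp (x * log (exp 1 * r) / 4) ^ i := by
    have : lam * i ≤ x * log (exp 1 * r) / 4 := calc
      lam * i ≤ b * (1 / m * log (exp 1 * p / m)) * i := by gcongr
      _ = b * (x * log (exp 1 * r)) := by simp only [x, r, mul_div_assoc]; ring
      _ ≤ x * log (exp 1 * r) / 4 := by nlinarith
    rw [← exp_nat_mul]
    exact exp_le_exp.2 (by nlinarith)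
  calc hyperPMF p m i * exp (lam * i ^ 2)
      ≤ (exp 1 / (r * x)) ^ i * exp (x * log (exp 1 * r) / 4) ^ i :=
        mul_le_mul hpmf hexp (exp_pos _).le (by positivity)
    _ = (exp 1 / (r * x) * exp (x * log (exp 1 * r) / 4)) ^ i := (mul_pow ..).symm
    _ ≤ (1 / 2) ^ i := by
        gcongr
        exact exp_one_div_mul_exp_log_le_half (by positivity) hx₁ hrx

theorem hyperPMF_mul_exp_sq_le {p m i : ℕ} {b lam : ℝ} (hm : 0 < m) (him : i ≤ m) (hmp : m ≤ p)
    (hb₀ : 0 ≤ b) (hb : b ≤ 1 / 4) (hlam₁ : lam ≤ b * (1 / m * log (exp 1 * p / m)))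
    (hlam₂ : lam ≤ b * (p ^ 2 / m ^ 4)) :
    hyperPMF p m i * exp (lam * i ^ 2) ≤ exp (b * exp 6) * hyperPMF p m i + (1 / 2) ^ i := by
  rcases le_or_gt ((i : ℝ) * p) (exp 3 * m ^ 2) with hsmall | hlarge
  · have hexp : lam * i ^ 2 ≤ b * exp 6 := calc
      lam * i ^ 2 ≤ b * (p ^ 2 / m ^ 4) * i ^ 2 := by gcongr
      _ = b * ((i * p) ^ 2 / m ^ 4) := by ring
      _ ≤ b * ((exp 3 * m ^ 2) ^ 2 / m ^ 4) := by gcongr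
      _ = b * exp 6 := by
        rw [mul_pow, ← pow_mul, ← exp_nat_mul, mul_div_assoc, div_self (by positivity), mul_one]
        norm_num
    calc hyperPMF p m i * exp (lam * i ^ 2) ≤ hyperPMF p m i * exp (b * exp 6) := by
          gcongr; exact hyperPMF_nonneg p m i
      _ ≤ exp (b * exp 6) * hyperPMF p m i + (1 / 2) ^ i := by
          rw [mul_comm]; exact le_add_of_nonneg_right (by positivity)
  · exact (hyperPMF_mul_exp_sq_le_half_pow him hmp hb hlam₁ hlarge).trans
      (le_add_of_nonneg_left (mul_nonneg (exp_pos _).le (hyperPMF_nonneg p m i)))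

/-- uniform bound on the MGF of the squared hypergeometric. -/
theorem hyperSqMGF_uniform_bound :
    ∃ b₀ : ℝ, 0 < b₀ ∧
      ∃ B : ℝ → ℝ,
        (∀ b, 0 < b → b < b₀ → 0 < B b) ∧
        ∀ (p m : ℕ), 1 ≤ m → m ≤ p →
          ∀ b : ℝ, 0 < b → b < b₀ →
            ∀ lam : ℝ,
              lam = b * min ((1 / (m : ℝ)) * Real.log (Real.exp 1 * p / m))
                  ((p : ℝ) ^ 2 / (m : ℝ) ^ 4) →
              hyperSqMGF p m lam ≤ B b := by
  refine ⟨1 / 4, by norm_num, fun b => exp (b * exp 6) + 2, fun b _ _ => by positivity, ?_⟩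
  rintro p m hm hmp b hb₀ hb lam rfl
  calc hyperSqMGF p m _
      ≤ ∑ i ∈ range (m + 1), (exp (b * exp 6) * hyperPMF p m i + (1 / 2) ^ i) := by
        refine sum_le_sum fun i hi => hyperPMF_mul_exp_sq_le hm (Nat.lt_succ_iff.1 (mem_range.1 hi))
          hmp hb₀.le hb.le ?_ ?_
        · gcongr; exact min_le_left _ _
        · gcongr; exact min_le_right _ _
    _ = exp (b * exp 6) + ∑ i ∈ range (m + 1), (1 / 2 : ℝ) ^ i := by
        rw [sum_add_distrib, ← mul_sum, sum_hyperPMF hmp, mul_one]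
    _ ≤ exp (b * exp 6) + 2 := by gcongr; exact sum_geometric_two_le _
end
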